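/- Fix s > 1 and γ ∈ (0, s-1). Suppose a sequence of nonnegative reals (a_j)_{j≥0} (indexed so that a_j corresponds to frequency 2^j M₀) satisfies a_j ≤ C₁ 2^{-sj} + Σ_{0 ≤ k ≤ j - m} 2^{-s(j-k)} a_k for all j (where 2^{-m} = β'), together with the uniform bound a_j ≤ A. If β'^{s-1} and β'^γ are sufficiently small depending only on s, γ, A, C₁, then a_j ≤ 2 C₁ 2^{-(s-γ)j} for all j ≥ 0. -/

import Mathlib

open MeasureTheory Real Complex Filter
open scoped FourierTransform ENNReal NNReal Topology ComplexConjugate RealInnerProductSpace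

noncomputable section

/-- `ℝ^d` as a Euclidean space. -/
abbrev Rd (d : ℕ) := EuclideanSpace ℝ (Fin d)

/-- Fourier multiplier operator with symbol `m`. -/
def fmul {d : ℕ} {E : Type*} [NormedAddCommGroup E] [NormedSpace ℂ E]
    (m : Rd d → ℂ) (f : Rd d → E) : Rd d → E :=
  𝓕⁻ (fun ξ => m ξ • 𝓕 f ξ)

/-- Fractional derivative `|∇|^s`, the Fourier multiplier with symbol `|ξ|^s`. -/
def fracDeriv {d : ℕ} {E : Type*} [NormedAddCommGroup E] [NormedSpace ℂ E]
    (s : ℝ) (f : Rd d → E) : Rd d → E :=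
  fmul (fun ξ => ((‖ξ‖ ^ s : ℝ) : ℂ)) f

/-- A smooth radial bump function equal to `1` on the unit ball and supported in the
ball of radius `25/24`. -/
structure IsBump {d : ℕ} (φ : Rd d → ℝ) : Prop where
  smooth : ContDiff ℝ (⊤ : ℕ∞) φ
  eq_one : ∀ x : Rd d, ‖x‖ ≤ 1 → φ x = 1
  eq_zero : ∀ x : Rd d, (25:ℝ)/24 < ‖x‖ → φ x = 0
  radial : ∀ x y : Rd d, ‖x‖ = ‖y‖ → φ x = φ y

/-- The Littlewood–Paley projection `P_{≤N}` built from the bump `φ`. -/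
def Ple {d : ℕ} {E : Type*} [NormedAddCommGroup E] [NormedSpace ℂ E]
    (φ : Rd d → ℝ) (N : ℝ) (f : Rd d → E) : Rd d → E :=
  fmul (fun ξ => ((φ (N⁻¹ • ξ) : ℝ) : ℂ)) f

/-- The Littlewood–Paley projection `P_N` to frequencies `|ξ| ∼ N`. -/
def PLP {d : ℕ} {E : Type*} [NormedAddCommGroup E] [NormedSpace ℂ E]
    (φ : Rd d → ℝ) (N : ℝ) (f : Rd d → E) : Rd d → E :=
  fmul (fun ξ => ((φ (N⁻¹ • ξ) - φ ((2 * N⁻¹) • ξ) : ℝ) : ℂ)) f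

/-- The projection `P_{>N}` to frequencies `≳ N`. -/
def Pgt {d : ℕ} {E : Type*} [NormedAddCommGroup E] [NormedSpace ℂ E]
    (φ : Rd d → ℝ) (N : ℝ) (f : Rd d → E) : Rd d → E :=
  fmul (fun ξ => (1 - (φ (N⁻¹ • ξ) : ℝ) : ℂ)) f

/-- The free Schrödinger propagator `e^{itΔ}`, defined via the Fourier transform. -/
def schrod {d : ℕ} (t : ℝ) (f : Rd d → ℂ) : Rd d → ℂ :=
  fmul (fun ξ => Complex.exp (-Complex.I * (4 * π ^ 2 * t * ‖ξ‖ ^ 2))) f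

/-- Mixed space-time norm `L_t^q L_x^r` on `I × ℝ^d` (with `L_t^∞` as a supremum over `I`). -/
def mixedNorm {d : ℕ} (q r : ℝ≥0∞) (I : Set ℝ) (u : ℝ → Rd d → ℂ) : ℝ≥0∞ :=
  if q = ∞ then ⨆ t ∈ I, eLpNorm (u t) r volume
  else (∫⁻ t in I, (eLpNorm (u t) r volume) ^ q.toReal) ^ (1 / q.toReal)

/-- The Strichartz norm `S(I) = L_t^∞ L_x^2 ∩ L_t^2 L_x^{2d/(d-2)}` (for `d ≥ 3`). -/
def SNorm (d : ℕ) (I : Set ℝ) (u : ℝ → Rd d → ℂ) : ℝ≥0∞ :=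
  mixedNorm ∞ 2 I u ⊔ mixedNorm 2 (ENNReal.ofReal (2 * d / ((d:ℝ) - 2))) I u

/-- The mass-critical nonlinearity `F(u) = μ |u|^{4/d} u`. -/
def nonlin (d : ℕ) (μ : ℝ) (f : Rd d → ℂ) : Rd d → ℂ :=
  fun x => (μ : ℂ) * ((‖f x‖ ^ ((4:ℝ) / d) : ℝ) : ℂ) * f x

/-- A strong `L^2_x` solution of `i u_t + Δ u = μ |u|^{4/d} u` on the interval `I`:
it is continuous in time with values in `L^2`, lies in `L_{t,x}^{2(d+2)/d}` on compact
subintervals, and satisfies the Duhamel formula. -/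
def IsSolution (d : ℕ) (μ : ℝ) (u : ℝ → Rd d → ℂ) (I : Set ℝ) : Prop :=
  I.OrdConnected ∧ I.Nonempty ∧
  (∀ t ∈ I, MemLp (u t) 2 volume) ∧
  (∀ t ∈ I, Tendsto (fun s => eLpNorm (fun x => u s x - u t x) 2 volume)
      (nhdsWithin t I) (𝓝 0)) ∧
  (∀ K : Set ℝ, K ⊆ I → IsCompact K →
      mixedNorm (ENNReal.ofReal (2 * ((d:ℝ) + 2) / d)) (ENNReal.ofReal (2 * ((d:ℝ) + 2) / d))
        K u < ∞) ∧
  (∀ t₀ ∈ I, ∀ t₁ ∈ I, ∀ x, u t₁ x =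
      schrod (t₁ - t₀) (u t₀) x -
        Complex.I * ∫ s in t₀..t₁, schrod (t₁ - s) (nonlin d μ (u s)) x)

/-- A maximal-lifespan solution: it cannot be extended to a strictly larger interval. -/
def IsMaxSolution (d : ℕ) (μ : ℝ) (u : ℝ → Rd d → ℂ) (I : Set ℝ) : Prop :=
  IsSolution d μ u I ∧
  ∀ (J : Set ℝ) (v : ℝ → Rd d → ℂ), I ⊆ J → IsSolution d μ v J →
    (∀ t ∈ I, v t = u t) → J = I

/-- Spherical symmetry of a time-dependent function. -/
def RadialSol {d : ℕ} (u : ℝ → Rd d → ℂ) : Prop :=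
  ∀ t : ℝ, ∀ x y : Rd d, ‖x‖ = ‖y‖ → u t x = u t y

/-- The improved Duhamel formula: for each `t ∈ I`, `u(t)` is the weak `L^2` limit of
`i ∫_t^T e^{i(t-τ)Δ} F(u(τ)) dτ` as `T → sup I` within `I`, and of
`-i ∫_T^t e^{i(t-τ)Δ} F(u(τ)) dτ` as `T → inf I` within `I`. -/
def ImprovedDuhamel (d : ℕ) (μ : ℝ) (u : ℝ → Rd d → ℂ) (I : Set ℝ) : Prop :=
  ∀ t ∈ I, ∀ g : Rd d → ℂ, MemLp g 2 volume →
    (Tendsto (fun T => ∫ x, conj (g x) *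
        (Complex.I * ∫ τ in t..T, schrod (t - τ) (nonlin d μ (u τ)) x))
      (atTop ⊓ Filter.principal I) (𝓝 (∫ x, conj (g x) * u t x))) ∧
    (Tendsto (fun T => ∫ x, conj (g x) *
        (-Complex.I * ∫ τ in T..t, schrod (t - τ) (nonlin d μ (u τ)) x))
      (atBot ⊓ Filter.principal I) (𝓝 (∫ x, conj (g x) * u t x)))

/-- Almost periodicity modulo scaling, in its tightness formulation: there are a frequency
scale function `N(t)` and a compactness modulus `C(η)` such that the mass of `u(t)` outside
the ball of radius `C(η)/N(t)`, and the mass of `û(t)` outside the ball of radius `C(η)N(t)`,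
are both at most `η`. -/
def APModScaling {d : ℕ} (u : ℝ → Rd d → ℂ) (I : Set ℝ) : Prop :=
  ∃ Nf : ℝ → ℝ, (∀ t ∈ I, 0 < Nf t) ∧ ∃ Cf : ℝ → ℝ, ∀ η : ℝ, 0 < η → ∀ t ∈ I,
    (∫⁻ x in {x : Rd d | Cf η / Nf t < ‖x‖}, (‖u t x‖₊ : ℝ≥0∞) ^ 2) ≤ ENNReal.ofReal η ∧
    (∫⁻ ξ in {ξ : Rd d | Cf η * Nf t < ‖ξ‖}, (‖𝓕 (u t) ξ‖₊ : ℝ≥0∞) ^ 2) ≤ ENNReal.ofReal η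

/-- The Laplacian of a real-valued function on `ℝ^d`. -/
def lap {d : ℕ} (f : Rd d → ℝ) (x : Rd d) : ℝ :=
  ∑ i : Fin d, iteratedFDeriv ℝ 2 f x ![EuclideanSpace.single i 1, EuclideanSpace.single i 1]

/-- The ground state `Q`: a positive, radial, Schwartz solution of `ΔQ - Q + Q^{1+4/d} = 0`. -/
def IsGroundState (d : ℕ) (Q : Rd d → ℝ) : Prop :=
  ContDiff ℝ (⊤ : ℕ∞) Q ∧ (∀ x, 0 < Q x) ∧ (∀ x y : Rd d, ‖x‖ = ‖y‖ → Q x = Q y) ∧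
  (∀ k n : ℕ, ∃ C : ℝ, ∀ x, ‖x‖ ^ k * ‖iteratedFDeriv ℝ n Q x‖ ≤ C) ∧
  (∀ x, lap Q x - Q x + Q x ^ ((1:ℝ) + 4 / d) = 0)

/-- `|∇u|²` for a complex-valued function. -/
def gradSq {d : ℕ} (u : Rd d → ℂ) (x : Rd d) : ℝ :=
  ∑ i : Fin d, ‖fderiv ℝ u x (EuclideanSpace.single i 1)‖ ^ 2

/-- Mass of a complex-valued function. -/
def massC {d : ℕ} (f : Rd d → ℂ) : ℝ := ∫ x, ‖f x‖ ^ 2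
/-- Mass of a real-valued function. -/
def massR {d : ℕ} (f : Rd d → ℝ) : ℝ := ∫ x, ‖f x‖ ^ 2

/-- The energy of `u` for the focusing mass-critical NLS. -/
def energy (d : ℕ) (u : Rd d → ℂ) : ℝ :=
  (1/2) * (∫ x, gradSq u x) -
    ((d:ℝ) / (2 * ((d:ℝ) + 2))) * ∫ x, ‖u x‖ ^ ((2 * ((d:ℝ) + 2)) / d)

/-- Recursive control, discrete reformulation. -/
theorem recursive_control_discrete (s γ C₁ A : ℝ) (hs : 1 < s) (hγ : 0 < γ)
    (hγ' : γ < s - 1) (hC₁ : 0 < C₁) (hA : 0 < A) :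
    ∃ ε : ℝ, 0 < ε ∧ ∀ (m : ℕ) (β' : ℝ), 0 < m → β' = (2:ℝ) ^ (-(m:ℝ)) →
      β' ^ (s - 1) < ε → β' ^ γ < ε →
      ∀ a : ℕ → ℝ, (∀ j, 0 ≤ a j) → (∀ j, a j ≤ A) →
        (∀ j : ℕ, a j ≤ C₁ * (2:ℝ) ^ (-(s * j)) +
          ∑ k ∈ (Finset.range (j + 1)).filter (fun k => k + m ≤ j),
            (2:ℝ) ^ (-(s * ((j:ℝ) - k))) * a k) →
        ∀ j : ℕ, a j ≤ 2 * C₁ * (2:ℝ) ^ (-((s - γ) * j)) := by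
  have h2 : (0:ℝ) < 2 := two_pos
  have hr1 : (1:ℝ) < (2:ℝ) ^ γ :=
    (Real.one_lt_rpow_iff_of_pos h2).mpr (Or.inl ⟨one_lt_two, hγ⟩)
  have hrpos : (0:ℝ) < (2:ℝ) ^ γ - 1 := by linarith
  have hneg1 : (2:ℝ) ^ (-γ) < 1 :=
    Real.rpow_lt_one_of_one_lt_of_neg one_lt_two (by linarith)
  refine ⟨(1 - (2:ℝ) ^ (-γ)) / 2, by linarith, ?_⟩
  intro m β' hm hβ hε1 hε2 a ha haA hrec j
  have hβpos : 0 < β' := by rw [hβ]; positivity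
  have hinv : (2:ℝ) ^ (-γ) = ((2:ℝ) ^ γ)⁻¹ := Real.rpow_neg h2.le γ
  have hkey : 2 * ((2:ℝ) ^ γ) * β' ^ γ ≤ (2:ℝ) ^ γ - 1 := by
    have h1 : β' ^ γ < (1 - (2:ℝ) ^ (-γ)) / 2 := hε2
    rw [hinv] at h1
    have h2γ : (0:ℝ) < (2:ℝ) ^ γ := Real.rpow_pos_of_pos h2 γ
    have h3 : ((2:ℝ) ^ γ)⁻¹ * (2:ℝ) ^ γ = 1 := inv_mul_cancel₀ (ne_of_gt h2γ)
    nlinarith [Real.rpow_pos_of_pos hβpos γ]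
  have hcomb : ∀ x y : ℝ, (2:ℝ) ^ x * (2:ℝ) ^ y = (2:ℝ) ^ (x + y) :=
    fun x y => (Real.rpow_add h2 x y).symm
  have hβγ : β' ^ γ = (2:ℝ) ^ (-((m:ℝ) * γ)) := by
    rw [hβ, ← Real.rpow_mul h2.le]
    congr 1
    ring
  induction j using Nat.strong_induction_on with
  | _ j ih =>
    have hXpos : (0:ℝ) < (2:ℝ) ^ (-((s - γ) * (j:ℝ))) := Real.rpow_pos_of_pos h2 _
    have hmono : (2:ℝ) ^ (-(s * (j:ℝ))) ≤ (2:ℝ) ^ (-((s - γ) * (j:ℝ))) := by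
      apply Real.rpow_le_rpow_left_iff one_lt_two |>.mpr
      have : 0 ≤ γ * (j:ℝ) := by positivity
      nlinarith
    have hsum : ∑ k ∈ (Finset.range (j + 1)).filter (fun k => k + m ≤ j),
        (2:ℝ) ^ (-(s * ((j:ℝ) - k))) * a k ≤ C₁ * (2:ℝ) ^ (-((s - γ) * (j:ℝ))) := by
      by_cases hjm : m ≤ j
      · have step : ∀ k ∈ (Finset.range (j + 1)).filter (fun k => k + m ≤ j),
            (2:ℝ) ^ (-(s * ((j:ℝ) - k))) * a k ≤
              2 * C₁ * (2:ℝ) ^ (-(s * (j:ℝ))) * ((2:ℝ) ^ γ) ^ k := by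
          intro k hk
          simp only [Finset.mem_filter, Finset.mem_range] at hk
          have hkj : k < j := by omega
          have hak := ih k hkj
          have hppos : (0:ℝ) < (2:ℝ) ^ (-(s * ((j:ℝ) - k))) := Real.rpow_pos_of_pos h2 _
          have hpow : (2:ℝ) ^ (-(s * ((j:ℝ) - k))) * (2 * C₁ * (2:ℝ) ^ (-((s - γ) * (k:ℝ))))
              = 2 * C₁ * (2:ℝ) ^ (-(s * (j:ℝ))) * ((2:ℝ) ^ γ) ^ k := by
            have h1 := hcomb (-(s * ((j:ℝ) - k))) (-((s - γ) * (k:ℝ)))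
            have h2' := hcomb (-(s * (j:ℝ))) (γ * (k:ℝ))
            have he : (-(s * ((j:ℝ) - k))) + (-((s - γ) * (k:ℝ)))
                = (-(s * (j:ℝ))) + (γ * (k:ℝ)) := by ring
            rw [← Real.rpow_natCast ((2:ℝ) ^ γ) k, ← Real.rpow_mul h2.le]
            rw [he] at h1
            linear_combination 2 * C₁ * h1 - 2 * C₁ * h2'
          calc (2:ℝ) ^ (-(s * ((j:ℝ) - k))) * a k
              ≤ (2:ℝ) ^ (-(s * ((j:ℝ) - k))) * (2 * C₁ * (2:ℝ) ^ (-((s - γ) * (k:ℝ)))) := by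
                exact mul_le_mul_of_nonneg_left hak hppos.le
            _ = 2 * C₁ * (2:ℝ) ^ (-(s * (j:ℝ))) * ((2:ℝ) ^ γ) ^ k := hpow
        have hsub : (Finset.range (j + 1)).filter (fun k => k + m ≤ j)
            ⊆ Finset.range (j - m + 1) := by
          intro k hk
          simp only [Finset.mem_filter, Finset.mem_range] at hk ⊢
          omega
        have hgeom : ∑ k ∈ Finset.range (j - m + 1), ((2:ℝ) ^ γ) ^ k
            ≤ ((2:ℝ) ^ γ) ^ (j - m + 1) / ((2:ℝ) ^ γ - 1) := by
          rw [geom_sum_eq (ne_of_gt hr1)]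
          apply (div_le_div_iff_of_pos_right hrpos).mpr
          linarith
        calc ∑ k ∈ (Finset.range (j + 1)).filter (fun k => k + m ≤ j),
              (2:ℝ) ^ (-(s * ((j:ℝ) - k))) * a k
            ≤ ∑ k ∈ (Finset.range (j + 1)).filter (fun k => k + m ≤ j),
              2 * C₁ * (2:ℝ) ^ (-(s * (j:ℝ))) * ((2:ℝ) ^ γ) ^ k :=
              Finset.sum_le_sum step
          _ ≤ ∑ k ∈ Finset.range (j - m + 1),
              2 * C₁ * (2:ℝ) ^ (-(s * (j:ℝ))) * ((2:ℝ) ^ γ) ^ k := by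
              apply Finset.sum_le_sum_of_subset_of_nonneg hsub
              intro k _ _
              positivity
          _ = 2 * C₁ * (2:ℝ) ^ (-(s * (j:ℝ))) *
              ∑ k ∈ Finset.range (j - m + 1), ((2:ℝ) ^ γ) ^ k := by
              rw [Finset.mul_sum]
          _ ≤ 2 * C₁ * (2:ℝ) ^ (-(s * (j:ℝ))) *
              (((2:ℝ) ^ γ) ^ (j - m + 1) / ((2:ℝ) ^ γ - 1)) := by
              apply mul_le_mul_of_nonneg_left hgeom
              positivity
          _ ≤ C₁ * (2:ℝ) ^ (-((s - γ) * (j:ℝ))) := by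
              have hcast : ((j - m : ℕ) : ℝ) = (j:ℝ) - (m:ℝ) := by
                push_cast [Nat.cast_sub hjm]; ring
              have hident : (2:ℝ) ^ (-(s * (j:ℝ))) * ((2:ℝ) ^ γ) ^ (j - m + 1)
                  = (2:ℝ) ^ (-((s - γ) * (j:ℝ))) * ((2:ℝ) ^ (-((m:ℝ) * γ)) * (2:ℝ) ^ γ) := by
                rw [← Real.rpow_natCast ((2:ℝ) ^ γ) (j - m + 1), ← Real.rpow_mul h2.le]
                rw [hcomb, hcomb, hcomb]
                congr 1
                push_cast [Nat.cast_sub hjm]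
                ring
              calc 2 * C₁ * (2:ℝ) ^ (-(s * (j:ℝ))) *
                    (((2:ℝ) ^ γ) ^ (j - m + 1) / ((2:ℝ) ^ γ - 1))
                  = 2 * C₁ * ((2:ℝ) ^ (-(s * (j:ℝ))) * ((2:ℝ) ^ γ) ^ (j - m + 1))
                    / ((2:ℝ) ^ γ - 1) := by ring
                _ = C₁ * (2:ℝ) ^ (-((s - γ) * (j:ℝ))) *
                    (2 * ((2:ℝ) ^ γ) * β' ^ γ) / ((2:ℝ) ^ γ - 1) := by
                    rw [hident, hβγ]; ring
                _ ≤ C₁ * (2:ℝ) ^ (-((s - γ) * (j:ℝ))) := by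
                    rw [div_le_iff₀ hrpos]
                    have hb : 0 ≤ C₁ * (2:ℝ) ^ (-((s - γ) * (j:ℝ))) := by positivity
                    nlinarith
      · have hempty : (Finset.range (j + 1)).filter (fun k => k + m ≤ j) = ∅ := by
          apply Finset.filter_false_of_mem
          intro k _
          omega
        rw [hempty, Finset.sum_empty]
        positivity
    calc a j ≤ C₁ * (2:ℝ) ^ (-(s * (j:ℝ))) +
          ∑ k ∈ (Finset.range (j + 1)).filter (fun k => k + m ≤ j),
            (2:ℝ) ^ (-(s * ((j:ℝ) - k))) * a k := hrec j
      _ ≤ C₁ * (2:ℝ) ^ (-((s - γ) * (j:ℝ))) + C₁ * (2:ℝ) ^ (-((s - γ) * (j:ℝ))) := by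
          have := mul_le_mul_of_nonneg_left hmono hC₁.le
          linarith
      _ = 2 * C₁ * (2:ℝ) ^ (-((s - γ) * (j:ℝ))) := by ring
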